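/- arXiv:2303.00946 — 5 statements merged into one kernel-verified Lean document; each statement's English description precedes it below -/
import Mathlib

section
/- Let φ(x) = (K/σ)·exp(−π x² K²/σ²) be a Gaussian density with σ, K > 0, and let φ_p(x) = Σ_{j∈ℤ} φ(x+j) be its periodization. If K ≥ 3σ, then for all x ∈ [−1/3, 1/3], φ(x) ≤ φ_p(x) ≤ (1 + 10⁻⁴)·φ(x). -/
/-!
Write `a = π K² / σ² ≥ 9π`; the `j`-th term of the periodization is `e^{-a x²} e^{-a (j² + 2xj)}`.
Since the periodized Gaussian is even, we may take `0 ≤ x ≤ 1/3`. Then `j² + 2xj ≥ j` for `j ≥ 0`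
and `j² + 2xj ≥ |j| / 3` for `j < 0`, so the two half-sums are dominated by geometric series of
ratios `e^{-a} ≤ e^{-9π}` and `e^{-a/3} ≤ e^{-3π}`, and `e^{3π} > 11000` makes the excess over the
`j = 0` term less than `10⁻⁴`. The asymmetry matters: ratio `e^{-3π}` on both sides would give
`2 e^{-3π} > 10⁻⁴`.
-/

open Real Set

lemma summable_and_tsum_le_of_le_geometric {f : ℕ → ℝ} {C r : ℝ} (hf : ∀ n, 0 ≤ f n)
    (hr₀ : 0 ≤ r) (hr₁ : r < 1) (h : ∀ n, f n ≤ C * r ^ n) :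
    Summable f ∧ ∑' n, f n ≤ C * (1 - r)⁻¹ := by
  have hgeom := (hasSum_geometric_of_lt_one hr₀ hr₁).mul_left C
  have hsum : Summable f := hgeom.summable.of_nonneg_of_le hf h
  exact ⟨hsum, hgeom.tsum_eq ▸ hsum.tsum_le_tsum h hgeom.summable⟩

section PeriodizedGaussian

variable {a c x : ℝ}

lemma exp_neg_mul_sq_le_mul_exp {y d : ℝ} (ha : 0 ≤ a) (h : x ^ 2 + d ≤ y ^ 2) :
    exp (-(a * y ^ 2)) ≤ exp (-(a * x ^ 2)) * exp (-(a * d)) := by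
  rw [← exp_add, exp_le_exp]
  nlinarith

lemma exp_neg_mul_sq_add_natCast_le (ha : 0 ≤ a) (hx : 0 ≤ x) (n : ℕ) :
    exp (-(a * (x + n) ^ 2)) ≤ exp (-(a * x ^ 2)) * exp (-a) ^ n := by
  have hn : (n : ℝ) ≤ n ^ 2 := by exact_mod_cast Nat.le_self_pow two_ne_zero n
  rw [← exp_nat_mul, show n * -a = -(a * n) by ring]
  exact exp_neg_mul_sq_le_mul_exp ha (by nlinarith)

lemma exp_neg_mul_sq_sub_natCast_succ_le (ha : 0 ≤ a) (hxc : x ≤ c) (n : ℕ) :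
    exp (-(a * (x - (n + 1)) ^ 2)) ≤
      exp (-(a * x ^ 2)) * exp (-(a * (1 - 2 * c))) * exp (-(a * (1 - 2 * c))) ^ n := by
  have hn : (0 : ℝ) ≤ n := n.cast_nonneg
  have hgap : 0 ≤ (n + 1) * (n + 2 * c - 2 * x) := by
    apply mul_nonneg <;> linarith
  rw [mul_assoc, ← pow_succ', ← exp_nat_mul, show (n + 1 : ℕ) * -(a * (1 - 2 * c)) =
    -(a * ((n + 1) * (1 - 2 * c))) by push_cast; ring]
  exact exp_neg_mul_sq_le_mul_exp ha (by nlinarith)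

lemma summable_and_tsum_exp_neg_mul_sq_add_int_le (ha : 0 < a) (hc : 2 * c < 1)
    (hx₀ : 0 ≤ x) (hxc : x ≤ c) :
    Summable (fun j : ℤ => exp (-(a * (x + j) ^ 2))) ∧
      ∑' j : ℤ, exp (-(a * (x + j) ^ 2)) ≤
        exp (-(a * x ^ 2)) * ((1 - exp (-a))⁻¹ +
          exp (-(a * (1 - 2 * c))) * (1 - exp (-(a * (1 - 2 * c))))⁻¹) := by
  set f : ℤ → ℝ := fun j => exp (-(a * (x + j) ^ 2))
  obtain ⟨hsum₁, hle₁⟩ := summable_and_tsum_le_of_le_geometric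
    (f := fun n : ℕ => f n) (r := exp (-a)) (fun n => (exp_pos _).le) (exp_pos _).le
    (exp_lt_one_iff.2 (by linarith)) (exp_neg_mul_sq_add_natCast_le ha.le hx₀)
  have hρ : exp (-(a * (1 - 2 * c))) < 1 := exp_lt_one_iff.2 (by nlinarith)
  obtain ⟨hsum₂, hle₂⟩ := summable_and_tsum_le_of_le_geometric
    (f := fun n : ℕ => f (-(n + 1))) (C := exp (-(a * x ^ 2)) * exp (-(a * (1 - 2 * c))))
    (fun n => (exp_pos _).le) (exp_pos _).le hρ fun n => by
      simp only [f, show x + Int.cast (-((n : ℤ) + 1)) = x - (n + 1) by push_cast; ring]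
      exact exp_neg_mul_sq_sub_natCast_succ_le ha.le hxc n
  refine ⟨.of_nat_of_neg_add_one hsum₁ hsum₂, ?_⟩
  rw [tsum_of_nat_of_neg_add_one hsum₁ hsum₂, mul_add, ← mul_assoc]
  exact add_le_add hle₁ hle₂

lemma summable_and_tsum_exp_neg_mul_sq_add_int_le_of_abs_le (ha : 0 < a) (hc : 2 * c < 1)
    (hx : |x| ≤ c) :
    Summable (fun j : ℤ => exp (-(a * (x + j) ^ 2))) ∧
      ∑' j : ℤ, exp (-(a * (x + j) ^ 2)) ≤
        exp (-(a * x ^ 2)) * ((1 - exp (-a))⁻¹ +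
          exp (-(a * (1 - 2 * c))) * (1 - exp (-(a * (1 - 2 * c))))⁻¹) := by
  rcases le_total 0 x with hx₀ | hx₀
  · exact summable_and_tsum_exp_neg_mul_sq_add_int_le ha hc hx₀ ((le_abs_self x).trans hx)
  · obtain ⟨hsum, hle⟩ := summable_and_tsum_exp_neg_mul_sq_add_int_le ha hc
      (neg_nonneg.2 hx₀) ((neg_le_abs x).trans hx)
    have hreflect : (fun j : ℤ => exp (-(a * (-x + j) ^ 2))) ∘ Equiv.neg ℤ =
        fun j : ℤ => exp (-(a * (x + j) ^ 2)) := by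
      funext j
      simp only [Function.comp_apply, Equiv.neg_apply, Int.cast_neg]
      ring_nf
    rw [neg_sq] at hle
    rw [← hreflect]
    exact ⟨(Equiv.neg ℤ).summable_iff.2 hsum, ((Equiv.neg ℤ).tsum_eq _).trans_le hle⟩

end PeriodizedGaussian

lemma exp_three_mul_pi_gt : 11000 < exp (3 * π) := by
  calc (11000 : ℝ) < 2.7182818283 ^ 9 * (0.42 + 1) := by norm_num
    _ ≤ exp 1 ^ 9 * exp 0.42 := by gcongr; exacts [exp_one_gt_d9.le, add_one_le_exp _]
    _ = exp 9.42 := by rw [← exp_nat_mul, ← exp_add]; norm_num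
    _ < exp (3 * π) := exp_lt_exp.2 (by linarith [pi_gt_d2])

lemma inv_one_sub_add_mul_inv_one_sub_le {s ρ : ℝ} (hs : s ≤ (1 / 11000) ^ 3)
    (hρ : ρ ≤ 1 / 11000) : (1 - s)⁻¹ + ρ * (1 - ρ)⁻¹ ≤ 1 + 10 ^ (-4 : ℤ) := by
  have hρ₁ : 0 < 1 - ρ := by linarith
  calc (1 - s)⁻¹ + ρ * (1 - ρ)⁻¹
      ≤ (1 - (1 / 11000) ^ 3)⁻¹ + 1 / 11000 * (1 - 1 / 11000)⁻¹ := by gcongr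
    _ ≤ 1 + 10 ^ (-4 : ℤ) := by norm_num

lemma summable_and_tsum_exp_neg_mul_sq_add_int_le_one_add {a x : ℝ} (ha : 9 * π ≤ a)
    (hx : |x| ≤ 1 / 3) :
    Summable (fun j : ℤ => exp (-(a * (x + j) ^ 2))) ∧
      ∑' j : ℤ, exp (-(a * (x + j) ^ 2)) ≤ (1 + 10 ^ (-4 : ℤ)) * exp (-(a * x ^ 2)) := by
  obtain ⟨hsum, hle⟩ := summable_and_tsum_exp_neg_mul_sq_add_int_le_of_abs_le (a := a)
    (c := 1 / 3) (by linarith [pi_pos]) (by norm_num) hx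
  have hu : exp (-(3 * π)) ≤ 1 / 11000 := by
    rw [exp_neg, one_div]
    exact inv_anti₀ (by norm_num) exp_three_mul_pi_gt.le
  refine ⟨hsum, hle.trans ?_⟩
  rw [mul_comm (1 + _)]
  refine mul_le_mul_of_nonneg_left (inv_one_sub_add_mul_inv_one_sub_le ?_ ?_) (exp_pos _).le
  · calc exp (-a) ≤ exp (-(3 * π)) ^ 3 := by
          rw [← exp_nat_mul]
          exact exp_le_exp.2 (by push_cast; linarith)
      _ ≤ (1 / 11000) ^ 3 := by gcongr
  · exact (exp_le_exp.2 (by linarith)).trans hu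

theorem periodized_gaussian_bounds_general (σ K : ℝ) (hσ : 0 < σ)
    (h3 : 3 * σ ≤ K) (x : ℝ) (hx : x ∈ Icc (-(1/3) : ℝ) (1/3)) :
    (K / σ) * Real.exp (-π * x ^ 2 * K ^ 2 / σ ^ 2) ≤
      (∑' j : ℤ, (K / σ) * Real.exp (-π * (x + j) ^ 2 * K ^ 2 / σ ^ 2)) ∧
    (∑' j : ℤ, (K / σ) * Real.exp (-π * (x + j) ^ 2 * K ^ 2 / σ ^ 2)) ≤
      (1 + 10 ^ (-(4:ℤ))) * ((K / σ) * Real.exp (-π * x ^ 2 * K ^ 2 / σ ^ 2)) := by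
  set a := π * K ^ 2 / σ ^ 2 with ha_def
  have ha : 9 * π ≤ a := by
    rw [ha_def, le_div_iff₀ (by positivity)]
    nlinarith [pi_pos, pow_le_pow_left₀ (by linarith : 0 ≤ 3 * σ) h3 2]
  have hexponent (y : ℝ) : -π * y ^ 2 * K ^ 2 / σ ^ 2 = -(a * y ^ 2) := by rw [ha_def]; ring
  have hKσ : 0 ≤ K / σ := div_nonneg (by linarith) hσ.le
  obtain ⟨hsum, hle⟩ := summable_and_tsum_exp_neg_mul_sq_add_int_le_one_add ha (abs_le.2 hx)
  simp only [hexponent, tsum_mul_left]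
  refine ⟨mul_le_mul_of_nonneg_left ?_ hKσ, ?_⟩
  · simpa using hsum.le_tsum 0 fun j _ => (exp_pos _).le
  · rw [mul_left_comm]
    exact mul_le_mul_of_nonneg_left hle hKσ

theorem periodized_gaussian_bounds (σ K : ℝ) (hσ : 0 < σ) (hK : 0 < K)
    (h3 : 3 * σ ≤ K) (x : ℝ) (hx : x ∈ Icc (-(1/3) : ℝ) (1/3)) :
    (K / σ) * Real.exp (-π * x ^ 2 * K ^ 2 / σ ^ 2) ≤
      (∑' j : ℤ, (K / σ) * Real.exp (-π * (x + j) ^ 2 * K ^ 2 / σ ^ 2)) ∧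
    (∑' j : ℤ, (K / σ) * Real.exp (-π * (x + j) ^ 2 * K ^ 2 / σ ^ 2)) ≤
      (1 + 10 ^ (-(4:ℤ))) * ((K / σ) * Real.exp (-π * x ^ 2 * K ^ 2 / σ ^ 2)) :=
  periodized_gaussian_bounds_general σ K hσ h3 x hx
end

section
/- Let φ_p(x) = Σ_{j∈ℤ} (K/σ)·exp(−π (x+j)² K²/σ²) with K ≥ 3σ > 0. Then φ_p is nonincreasing on [0, 1/2] and nondecreasing on [−1/2, 0]. -/
/-!
With `a = π K² / σ²` and `g t = t exp (-a t²)`, the derivative of `φ_p` is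
`-2a (K/σ) ∑ⱼ g (x + j)`, and `φ_p` is even, so it suffices to show `S x = ∑ⱼ g (x + j) ≥ 0`
for `x ∈ [0, 1/2]`. Since `K ≥ 3σ`, `a ≥ 9π > 20`, so `g` decreases on `[1/4, ∞)`.
For `x ≥ 1/4`, pairing `j` with `-(j + 1)` writes `S x` as a sum of the nonnegative terms
`g (n + x) - g (n + 1 - x)`. For `x ≤ 1/4`, pairing `j` with `-j` gives
`S x = g x - ∑_{m ≥ 1} (g (m - x) - g (m + x))`, and the `m`-th difference is at most
`4 a x m² exp (-a (m - x)²) ≤ g x · 4 a m² exp (-a m (m - 1/2))`,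
a geometrically small share of `g x`.
-/

open Real Set

namespace PeriodizedGaussian

variable {a x : ℝ}

/-- `-1 / (2a)` times the derivative of `t ↦ exp (-a t²)`. -/
noncomputable def oddGaussian (a t : ℝ) : ℝ := t * exp (-a * t ^ 2)

theorem oddGaussian_neg (a t : ℝ) : oddGaussian a (-t) = -oddGaussian a t := by
  simp only [oddGaussian, neg_sq, neg_mul]

/-- The bound has the shape of `summable_pow_mul_jacobiTheta₂_term_bound`. -/
theorem exp_neg_mul_add_sq_le {r y : ℝ} (ha : 0 ≤ a) (hy : |y| ≤ r) (j : ℤ) :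
    exp (-a * (y + j) ^ 2) ≤ exp (-π * (a / π * j ^ 2 - 2 * (a * r / π) * |(j : ℝ)|)) := by
  rw [exp_le_exp, show -π * (a / π * j ^ 2 - 2 * (a * r / π) * |(j : ℝ)|)
    = -(a * j ^ 2 - 2 * a * r * |(j : ℝ)|) by field_simp]
  have hyj : -(|y| * |(j : ℝ)|) ≤ y * j := by rw [← abs_mul]; exact neg_abs_le _
  nlinarith [mul_nonneg ha (mul_nonneg (abs_nonneg (j : ℝ)) (sub_nonneg.2 hy)), sq_nonneg y]

theorem summable_oddGaussian_majorant (ha : 0 < a) (r : ℝ) :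
    Summable fun j : ℤ =>
      (|(j : ℝ)| + r) * exp (-π * (a / π * j ^ 2 - 2 * (a * r / π) * |(j : ℝ)|)) := by
  have h := summable_pow_mul_jacobiTheta₂_term_bound (a * r / π) (div_pos ha pi_pos)
  refine ((h 1).add ((h 0).mul_left r)).congr fun j => ?_
  push_cast
  ring

theorem abs_oddGaussian_add_le {r y : ℝ} (ha : 0 ≤ a) (hy : |y| ≤ r) (j : ℤ) :
    |oddGaussian a (y + j)|
      ≤ (|(j : ℝ)| + r) * exp (-π * (a / π * j ^ 2 - 2 * (a * r / π) * |(j : ℝ)|)) := by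
  rw [oddGaussian, abs_mul, abs_exp]
  exact mul_le_mul ((abs_add_le y j).trans (by linarith)) (exp_neg_mul_add_sq_le ha hy j)
    (exp_pos _).le (by linarith [abs_nonneg y, abs_nonneg (j : ℝ)])

theorem summable_oddGaussian_add (ha : 0 < a) (x : ℝ) :
    Summable fun j : ℤ => oddGaussian a (x + j) :=
  (summable_oddGaussian_majorant ha |x|).of_norm_bounded fun j =>
    abs_oddGaussian_add_le ha.le le_rfl j

theorem antitoneOn_oddGaussian {c : ℝ} (hc : 0 < c) (h : 1 ≤ 2 * a * c ^ 2) :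
    AntitoneOn (oddGaussian a) (Ici c) := by
  intro u (hu : c ≤ u) v (hv : c ≤ v) huv
  have ha : 0 < a := by nlinarith
  have hgrowth : 1 ≤ 2 * a * u ^ 2 := h.trans (by gcongr)
  have hv_le : v ≤ u * exp (a * (v ^ 2 - u ^ 2)) :=
    calc v ≤ u * (a * (v ^ 2 - u ^ 2) + 1) := by
          nlinarith [mul_nonneg (sub_nonneg.2 huv) (mul_nonneg (mul_nonneg ha.le (hc.le.trans hu))
            (sub_nonneg.2 huv))]
      _ ≤ u * exp (a * (v ^ 2 - u ^ 2)) :=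
          mul_le_mul_of_nonneg_left (add_one_le_exp _) (hc.le.trans hu)
  calc v * exp (-a * v ^ 2) ≤ u * exp (a * (v ^ 2 - u ^ 2)) * exp (-a * v ^ 2) := by gcongr
    _ = u * exp (-a * u ^ 2) := by rw [mul_assoc, ← exp_add]; ring_nf

theorem tsum_oddGaussian_add_nonneg_of_quarter_le (ha : 8 ≤ a)
    (hf : Summable fun j : ℤ => oddGaussian a (x + j)) (hx : 1 / 4 ≤ x) (hx' : x ≤ 1 / 2) :
    0 ≤ ∑' j : ℤ, oddGaussian a (x + j) := by
  rw [← tsum_nat_add_neg_add_one hf]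
  refine tsum_nonneg fun n => ?_
  have hn : (0 : ℝ) ≤ n := n.cast_nonneg
  have hanti := antitoneOn_oddGaussian (a := a) (c := 1 / 4) (by norm_num) (by linarith)
  have hpair : oddGaussian a (n + 1 - x) ≤ oddGaussian a (x + n) :=
    hanti (show 1 / 4 ≤ x + n by linarith) (show 1 / 4 ≤ (n : ℝ) + 1 - x by linarith)
      (by linarith)
  have hodd : oddGaussian a (x + ((-(n + 1) : ℤ) : ℝ)) = -oddGaussian a (n + 1 - x) := by
    rw [← oddGaussian_neg]; push_cast; ring_nf
  rw [hodd]
  push_cast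
  linarith

theorem oddGaussian_sub_oddGaussian_le {m : ℝ} (hx : 0 ≤ x) (hm : 0 ≤ m) :
    oddGaussian a (m - x) - oddGaussian a (m + x)
      ≤ 4 * a * x * m ^ 2 * exp (-a * (m - x) ^ 2) := by
  have hE : exp (-a * (m + x) ^ 2) = exp (-a * (m - x) ^ 2) * exp (-(4 * a * m * x)) := by
    rw [← exp_add]; ring_nf
  have h1 := one_sub_le_exp_neg (4 * a * m * x)
  have hE₁ := (exp_pos (-a * (m - x) ^ 2)).le
  have hE₂ := (exp_pos (-(4 * a * m * x))).le
  simp only [oddGaussian, hE]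
  nlinarith [mul_nonneg hm hE₁, mul_nonneg (mul_nonneg hm hE₁) (sub_nonneg.2 h1),
    mul_nonneg hx hE₁, mul_nonneg hx (mul_nonneg hE₁ hE₂)]

theorem exp_neg_mul_nat_add_one_sub_sq_le (ha : 0 ≤ a) (hx : x ≤ 1 / 4) (n : ℕ) :
    exp (-a * (n + 1 - x) ^ 2) ≤ exp (-a * x ^ 2) * exp (-a / 2) * exp (-(3 / 2) * a) ^ n := by
  rw [← exp_nat_mul, ← exp_add, ← exp_add, exp_le_exp]
  have hn : (0 : ℝ) ≤ n := n.cast_nonneg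
  nlinarith [mul_nonneg ha (sq_nonneg (n : ℝ)),
    mul_nonneg ha (mul_nonneg (sub_nonneg.2 hx) (by linarith : (0 : ℝ) ≤ n + 1))]

theorem add_one_sq_mul_pow_le {r : ℝ} (hr₀ : 0 ≤ r) (hr : r ≤ 1 / 8) (n : ℕ) :
    ((n : ℝ) + 1) ^ 2 * r ^ n ≤ (1 / 2) ^ n := by
  have h2 : (n : ℝ) + 1 ≤ 2 ^ n := by exact_mod_cast n.lt_two_pow_self
  calc ((n : ℝ) + 1) ^ 2 * r ^ n ≤ (2 ^ n) ^ 2 * r ^ n := by gcongr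
    _ = (4 * r) ^ n := by rw [← pow_mul, mul_comm n, pow_mul, mul_pow]; norm_num
    _ ≤ (1 / 2) ^ n := by gcongr; linarith

theorem eight_mul_mul_exp_neg_half_le_one (ha : 20 ≤ a) : 8 * a * exp (-a / 2) ≤ 1 := by
  have hcubic := Real.pow_div_factorial_le_exp (a / 2) (by linarith) 3
  norm_num [Nat.factorial] at hcubic
  have h8 : 8 * a ≤ exp (a / 2) := by
    nlinarith [mul_nonneg (by linarith : 0 ≤ a) (by nlinarith : (0 : ℝ) ≤ a ^ 2 - 384)]
  calc 8 * a * exp (-a / 2) ≤ exp (a / 2) * exp (-a / 2) := by gcongr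
    _ = 1 := by rw [← exp_add, neg_div, add_neg_cancel, exp_zero]

theorem oddGaussian_nat_add_one_sub_le (ha : 20 ≤ a) (hx : 0 ≤ x) (hx' : x ≤ 1 / 4) (n : ℕ) :
    oddGaussian a (n + 1 - x) - oddGaussian a (n + 1 + x)
      ≤ 4 * a * x * exp (-a * x ^ 2) * exp (-a / 2) * (1 / 2) ^ n := by
  have ha₀ : 0 ≤ a := by linarith
  have hr : exp (-(3 / 2) * a) ≤ 1 / 8 := by
    rw [neg_mul, exp_neg, inv_le_comm₀ (exp_pos _) (by norm_num)]
    linarith [add_one_le_exp ((3 / 2) * a)]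
  calc oddGaussian a (n + 1 - x) - oddGaussian a (n + 1 + x)
      ≤ 4 * a * x * ((n : ℝ) + 1) ^ 2 * exp (-a * (n + 1 - x) ^ 2) :=
        oddGaussian_sub_oddGaussian_le hx (by positivity)
    _ ≤ 4 * a * x * ((n : ℝ) + 1) ^ 2 *
          (exp (-a * x ^ 2) * exp (-a / 2) * exp (-(3 / 2) * a) ^ n) := by
        gcongr
        exact exp_neg_mul_nat_add_one_sub_sq_le ha₀ hx' n
    _ = 4 * a * x * exp (-a * x ^ 2) * exp (-a / 2) *
          (((n : ℝ) + 1) ^ 2 * exp (-(3 / 2) * a) ^ n) := by ring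
    _ ≤ 4 * a * x * exp (-a * x ^ 2) * exp (-a / 2) * (1 / 2) ^ n := by
        gcongr
        exact add_one_sq_mul_pow_le (exp_pos _).le hr n

theorem tsum_oddGaussian_add_nonneg_of_le_quarter (ha : 20 ≤ a)
    (hf : Summable fun j : ℤ => oddGaussian a (x + j)) (hx : 0 ≤ x) (hx' : x ≤ 1 / 4) :
    0 ≤ ∑' j : ℤ, oddGaussian a (x + j) := by
  set D := fun n : ℕ => oddGaussian a (n + 1 - x) - oddGaussian a (n + 1 + x)
  set C := 4 * a * x * exp (-a * x ^ 2) * exp (-a / 2)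
  have hpair : ∀ n : ℕ, oddGaussian a (x + ((n + 1 : ℕ) : ℤ)) +
      oddGaussian a (x + ((-((n + 1 : ℕ) : ℤ) : ℤ) : ℝ)) = -D n := by
    intro n
    rw [show x + ((-((n + 1 : ℕ) : ℤ) : ℤ) : ℝ) = -(n + 1 - x) by push_cast; ring,
      oddGaussian_neg]
    push_cast
    simp only [D]
    ring_nf
  have hsummable : Summable D := by
    refine ((summable_nat_add_iff 1).2 hf.nat_add_neg).neg.congr fun n => ?_
    rw [hpair, neg_neg]
  have hsplit : ∑' j : ℤ, oddGaussian a (x + j) = oddGaussian a x - ∑' n, D n := by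
    have h := tsum_nat_add_neg hf
    rw [hf.nat_add_neg.tsum_eq_zero_add] at h
    simp only [hpair, tsum_neg] at h
    push_cast at h
    simp only [add_zero, neg_zero] at h
    linarith
  have hDsum : ∑' n, D n ≤ 2 * C := by
    rw [← tsum_geometric_two, mul_comm, ← tsum_mul_left]
    exact hsummable.tsum_le_tsum (oddGaussian_nat_add_one_sub_le ha hx hx')
      (summable_geometric_two.mul_left C)
  have hCle : 2 * C ≤ oddGaussian a x :=
    calc 2 * C = 8 * a * exp (-a / 2) * (x * exp (-a * x ^ 2)) := by ring
      _ ≤ 1 * (x * exp (-a * x ^ 2)) := by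
          gcongr; exact eight_mul_mul_exp_neg_half_le_one ha
      _ = oddGaussian a x := one_mul _
  linarith

theorem tsum_oddGaussian_add_nonneg (ha : 20 ≤ a) (hx : 0 ≤ x) (hx' : x ≤ 1 / 2) :
    0 ≤ ∑' j : ℤ, oddGaussian a (x + j) := by
  have hf := summable_oddGaussian_add (a := a) (by linarith) x
  rcases le_total x (1 / 4) with hsmall | hlarge
  · exact tsum_oddGaussian_add_nonneg_of_le_quarter ha hf hx hsmall
  · exact tsum_oddGaussian_add_nonneg_of_quarter_le (by linarith) hf hlarge hx'

noncomputable def periodizedGaussian (a x : ℝ) : ℝ := ∑' j : ℤ, exp (-a * (x + j) ^ 2)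

theorem hasDerivAt_periodizedGaussian (ha : 0 < a) (y : ℝ) :
    HasDerivAt (periodizedGaussian a) (-2 * a * ∑' j : ℤ, oddGaussian a (y + j)) y := by
  set r := |y| + 1
  have hr : 0 < r := by positivity
  have hball : ∀ z ∈ Ioo (-r) r, |z| ≤ r := fun z hz => (abs_lt.2 hz).le
  have hterm : ∀ (j : ℤ) (z : ℝ), HasDerivAt (fun z => exp (-a * (z + j) ^ 2))
      (-2 * a * oddGaussian a (z + j)) z := fun j z => by
    refine ((((hasDerivAt_id' z).add_const (j : ℝ)).fun_pow 2).const_mul (-a)).exp.congr_deriv ?_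
    norm_num [oddGaussian]
    ring
  have hsum := hasDerivAt_tsum_of_isPreconnected
    ((summable_oddGaussian_majorant ha r).mul_left (2 * a)) isOpen_Ioo isPreconnected_Ioo
    (fun j z _ => hterm j z) (fun j z hz => ?_) ⟨by linarith, hr⟩ ?_
    (show y ∈ Ioo (-r) r from abs_lt.1 (by simp [r]))
  · rwa [tsum_mul_left] at hsum
  · rw [Real.norm_eq_abs, abs_mul, abs_mul, abs_neg, abs_two, abs_of_pos ha]
    gcongr
    exact abs_oddGaussian_add_le ha.le (hball z hz) j
  · refine (summable_oddGaussian_majorant ha r).of_nonneg_of_le (fun j => (exp_pos _).le)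
      fun j => ?_
    refine (exp_neg_mul_add_sq_le ha.le (by simpa using hr.le) j).trans ?_
    exact le_mul_of_one_le_left (exp_pos _).le (by linarith [abs_nonneg y, abs_nonneg (j : ℝ)])

theorem periodizedGaussian_neg (a x : ℝ) :
    periodizedGaussian a (-x) = periodizedGaussian a x := by
  rw [periodizedGaussian, periodizedGaussian, ← (Equiv.neg ℤ).tsum_eq]
  congr! 2 with j
  simp only [Equiv.neg_apply, Int.cast_neg]
  ring_nf

theorem antitoneOn_periodizedGaussian (ha : 20 ≤ a) :
    AntitoneOn (periodizedGaussian a) (Icc 0 (1 / 2)) := by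
  have hderiv := hasDerivAt_periodizedGaussian (a := a) (by linarith)
  refine antitoneOn_of_hasDerivWithinAt_nonpos (convex_Icc _ _)
    (fun x _ => (hderiv x).continuousAt.continuousWithinAt)
    (fun x _ => (hderiv x).hasDerivWithinAt) fun x hx => ?_
  rw [interior_Icc] at hx
  exact mul_nonpos_of_nonpos_of_nonneg (by linarith)
    (tsum_oddGaussian_add_nonneg ha hx.1.le hx.2.le)

theorem monotoneOn_periodizedGaussian (ha : 20 ≤ a) :
    MonotoneOn (periodizedGaussian a) (Icc (-(1 / 2)) 0) := by
  intro x hx y hy hxy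
  rw [← periodizedGaussian_neg a x, ← periodizedGaussian_neg a y]
  exact antitoneOn_periodizedGaussian ha ⟨by linarith [hy.2], by linarith [hy.1]⟩
    ⟨by linarith [hx.2], by linarith [hx.1]⟩ (neg_le_neg hxy)

end PeriodizedGaussian

open PeriodizedGaussian in
theorem periodized_gaussian_monotone (σ K : ℝ) (hσ : 0 < σ) (h3 : 3 * σ ≤ K) :
    AntitoneOn (fun x : ℝ => ∑' j : ℤ, (K / σ) * Real.exp (-π * (x + j) ^ 2 * K ^ 2 / σ ^ 2))
      (Icc (0 : ℝ) (1/2)) ∧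
    MonotoneOn (fun x : ℝ => ∑' j : ℤ, (K / σ) * Real.exp (-π * (x + j) ^ 2 * K ^ 2 / σ ^ 2))
      (Icc (-(1/2) : ℝ) 0) := by
  have ha : 20 ≤ π * K ^ 2 / σ ^ 2 := by
    have h9 : 9 ≤ K ^ 2 / σ ^ 2 := by rw [le_div_iff₀ (by positivity)]; nlinarith
    rw [mul_div_assoc]
    nlinarith [pi_gt_three]
  have hc : 0 ≤ K / σ := div_nonneg (by linarith) hσ.le
  have hφ : (fun x : ℝ => ∑' j : ℤ, (K / σ) * Real.exp (-π * (x + j) ^ 2 * K ^ 2 / σ ^ 2)) =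
      fun x => K / σ * periodizedGaussian (π * K ^ 2 / σ ^ 2) x := by
    ext x
    rw [periodizedGaussian, ← tsum_mul_left]
    refine tsum_congr fun j => ?_
    congr 2
    ring
  rw [hφ]
  exact ⟨fun x hx y hy hxy =>
      mul_le_mul_of_nonneg_left (antitoneOn_periodizedGaussian ha hx hy hxy) hc,
    fun x hx y hy hxy =>
      mul_le_mul_of_nonneg_left (monotoneOn_periodizedGaussian ha hx hy hxy) hc⟩
end

section
/- Let σ, K > 0 with K ≥ 3σ, and φ_p(x) = Σ_{j∈ℤ} (K/σ)·exp(−π(x+j)²K²/σ²). Then Σ_{k∈ℤ} exp(−π(kσ/K)²) = φ_p(0) ≤ (1 + 10⁻⁴)·K/σ. -/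
/-!
By Poisson summation (the Jacobi theta transformation) with scale `s = σ / K`, the sum of the
Fourier coefficients equals `φ_p(0) = (K / σ) ∑ exp (-c j²)` with `c = π K² / σ² ≥ 9π`.
Since `j² ≥ |j|`, that theta sum is at most the two-sided geometric series
`∑ exp (-c) ^ |j| = (1 + e^{-c}) / (1 - e^{-c})`, which exceeds 1 by less than `10⁻⁴` because
`e^{-c} ≤ 2⁻²⁷`.
-/

open Real

theorem hasSum_pow_natAbs_of_abs_lt_one {r : ℝ} (hr : |r| < 1) :
    HasSum (fun n : ℤ => r ^ n.natAbs) ((1 + r) / (1 - r)) := by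
  have hpos : HasSum (fun n : ℕ => r ^ n) (1 - r)⁻¹ := hasSum_geometric_of_abs_lt_one hr
  have hneg : HasSum (fun n : ℕ => r ^ (-((n : ℤ) + 1)).natAbs) (r * (1 - r)⁻¹) := by
    have habs (n : ℕ) : (-((n : ℤ) + 1)).natAbs = n + 1 := by omega
    simpa only [habs, pow_succ'] using hpos.mul_left r
  have hr1 : 1 - r ≠ 0 := by linarith [le_abs_self r]
  have hval : (1 - r)⁻¹ + r * (1 - r)⁻¹ = (1 + r) / (1 - r) := by field_simp
  exact hval ▸ hpos.of_nat_of_neg_add_one (f := fun n : ℤ => r ^ n.natAbs) hneg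

theorem exp_neg_mul_int_sq_le_pow_natAbs {c : ℝ} (hc : 0 ≤ c) (n : ℤ) :
    exp (-c * (n : ℝ) ^ 2) ≤ exp (-c) ^ n.natAbs := by
  rw [← exp_nat_mul, exp_le_exp]
  have : (n.natAbs : ℝ) ≤ (n : ℝ) ^ 2 := by
    rw [Nat.cast_natAbs]; exact_mod_cast Int.natAbs_le_self_sq n
  nlinarith

theorem tsum_exp_neg_mul_int_sq_le {c : ℝ} (hc : 0 < c) :
    ∑' n : ℤ, exp (-c * (n : ℝ) ^ 2) ≤ (1 + exp (-c)) / (1 - exp (-c)) := by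
  have hr : |exp (-c)| < 1 := by
    rw [abs_of_pos (exp_pos _), exp_lt_one_iff]; linarith
  have hgeom := hasSum_pow_natAbs_of_abs_lt_one hr
  have hle := exp_neg_mul_int_sq_le_pow_natAbs hc.le
  have hsum : Summable fun n : ℤ => exp (-c * (n : ℝ) ^ 2) :=
    hgeom.summable.of_nonneg_of_le (fun _ => (exp_pos _).le) hle
  exact hasSum_le hle hsum.hasSum hgeom

theorem tsum_exp_neg_mul_int_sq_le_of_27_le {c : ℝ} (hc : 27 ≤ c) :
    ∑' n : ℤ, exp (-c * (n : ℝ) ^ 2) ≤ 1 + 10 ^ (-(4 : ℤ)) := by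
  have hr : exp (-c) ≤ (2 ^ 27 : ℝ)⁻¹ := calc
    exp (-c) ≤ exp (-27) := exp_le_exp.mpr (by linarith)
    _ = (exp 1 ^ 27)⁻¹ := by rw [← exp_nat_mul, ← exp_neg]; norm_num
    _ ≤ (2 ^ 27)⁻¹ := by gcongr; linarith [add_one_le_exp (1 : ℝ)]
  refine (tsum_exp_neg_mul_int_sq_le (by linarith)).trans ?_
  rw [div_le_iff₀ (by linarith)]
  norm_num at hr ⊢
  linarith

theorem tsum_exp_neg_pi_int_mul_sq {s : ℝ} (hs : 0 < s) :
    ∑' n : ℤ, exp (-π * ((n : ℝ) * s) ^ 2) = s⁻¹ * ∑' n : ℤ, exp (-π * ((n : ℝ) / s) ^ 2) := by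
  have hsqrt : (s ^ 2) ^ (1 / 2 : ℝ) = s := by rw [← sqrt_eq_rpow, sqrt_sq hs.le]
  calc ∑' n : ℤ, exp (-π * ((n : ℝ) * s) ^ 2)
      = ∑' n : ℤ, exp (-π * s ^ 2 * (n : ℝ) ^ 2) := by congr 1 with n; congr 1; ring
    _ = s⁻¹ * ∑' n : ℤ, exp (-π / s ^ 2 * (n : ℝ) ^ 2) := by
      rw [tsum_exp_neg_mul_int_sq (by positivity), hsqrt, one_div]
    _ = s⁻¹ * ∑' n : ℤ, exp (-π * ((n : ℝ) / s) ^ 2) := by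
      congr 2 with n; congr 1; ring

theorem poisson_summation_periodized_gaussian (σ K : ℝ) (hσ : 0 < σ) (h3 : 3 * σ ≤ K) :
    (∑' k : ℤ, Real.exp (-π * (k * σ / K) ^ 2)) =
      (∑' j : ℤ, (K / σ) * Real.exp (-π * ((0:ℝ) + j) ^ 2 * K ^ 2 / σ ^ 2)) ∧
    (∑' j : ℤ, (K / σ) * Real.exp (-π * ((0:ℝ) + j) ^ 2 * K ^ 2 / σ ^ 2)) ≤
      (1 + 10 ^ (-(4:ℤ))) * (K / σ) := by
  have hK : 0 < K := by linarith
  have hφ : ∑' j : ℤ, (K / σ) * exp (-π * ((0:ℝ) + j) ^ 2 * K ^ 2 / σ ^ 2) =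
      (K / σ) * ∑' j : ℤ, exp (-(π * (K / σ) ^ 2) * (j : ℝ) ^ 2) := by
    rw [tsum_mul_left]; congr 2 with n; congr 1; ring
  have hc : 27 ≤ π * (K / σ) ^ 2 := by
    have : 3 ≤ K / σ := by rwa [le_div_iff₀ hσ]
    nlinarith [pi_gt_three]
  refine ⟨?_, ?_⟩
  · rw [hφ]
    convert tsum_exp_neg_pi_int_mul_sq (div_pos hσ hK) using 1
    · congr 1 with n; congr 1; ring
    · rw [inv_div]; congr 2 with n; congr 1; field_simp
  · rw [hφ, mul_comm _ (K / σ)]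
    exact mul_le_mul_of_nonneg_left (tsum_exp_neg_mul_int_sq_le_of_27_le hc) (by positivity)
end

section
/- Under the real-line setting (f_* = Σ_s w_s δ_{x_s} + r on ℝ, w_s ≥ β, r(ℝ) ≤ ω < β, |y(k) − f̂_*(k)| ≤ ε ≤ (β−ω)/6 on [−K,K], σ = √((1/π)log(6/(β−ω)))), every point x of the estimated set X_e = {x : |∫_{|k|≤K} y(k)e^{−π(kσ/K)²}e^{2πikx} dk| > (2β+ω)K/(3σ)} satisfies dist(x, {x_1,…,x_S}) ≤ τ/K, where τ = (1/π)log(6/(β−ω)). -/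
open Real MeasureTheory Set

open Complex (I)
open scoped Complex

/-!
Up to the measurement error, the estimator is the convolution of `f_*` with the window
`φ(u) = ∫_{-K}^{K} e^{-b k²} e^{2πiku} dk`, `b = π σ² / K²`, and `‖φ‖ ≤ √(π / b) = K / σ`. The
window is the Fourier transform `(K / σ) e^{-π² u² / b}` of the Gaussian minus its tail beyond the
band, and for `|u| > τ / K` each of the two is at most `(K / σ) e^{-π τ} = (K / σ) (β - ω) / 6`.
Hence far from every spike the error contributes `ε K / σ`, the spikes `(∑ w_s) (β - ω) K / (3σ)`
and the residue `ω K / σ`, which add up to at most `(2β + ω) K / (3σ)`.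
-/

lemma setIntegral_Ioi_comp_sub {E : Type*} [NormedAddCommGroup E] [NormedSpace ℝ E]
    (c : ℝ) (g : ℝ → E) : ∫ x in Ioi c, g (x - c) = ∫ x in Ioi 0, g x := by
  have hshift : MeasurableEmbedding fun x : ℝ => x - c :=
    (Homeomorph.subRight c).isClosedEmbedding.measurableEmbedding
  have hmap : volume.map (fun x : ℝ => x - c) = volume := by
    simpa only [sub_eq_add_neg] using map_add_right_eq_self volume (-c)
  have hpre : (fun x : ℝ => x - c) ⁻¹' Ioi 0 = Ioi c := by ext; simp
  rw [← hpre, ← hshift.setIntegral_map, hmap]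

lemma integral_Ioi_exp_neg_mul_sq_le {b K : ℝ} (hb : 0 < b) (hK : 0 ≤ K) :
    ∫ k in Ioi K, rexp (-b * k ^ 2) ≤ rexp (-b * K ^ 2) * (√(π / b) / 2) := by
  have hint : Integrable fun k : ℝ => rexp (-b * k ^ 2) := integrable_exp_neg_mul_sq hb
  calc ∫ k in Ioi K, rexp (-b * k ^ 2)
      ≤ ∫ k in Ioi K, rexp (-b * K ^ 2) * rexp (-b * (k - K) ^ 2) := by
        refine setIntegral_mono_on hint.integrableOn
          ((hint.comp_sub_right K).const_mul _).integrableOn measurableSet_Ioi fun k hk => ?_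
        -- `k² ≥ K² + (k - K)²` for `k ≥ K ≥ 0`
        rw [← Real.exp_add, Real.exp_le_exp]
        nlinarith [mul_nonneg (mul_nonneg hb.le hK) (sub_nonneg.2 (le_of_lt (mem_Ioi.1 hk)))]
    _ = rexp (-b * K ^ 2) * (√(π / b) / 2) := by
        rw [integral_const_mul, setIntegral_Ioi_comp_sub K fun k => rexp (-b * k ^ 2),
          integral_gaussian_Ioi]

lemma integral_compl_Icc_exp_neg_mul_sq_le {b K : ℝ} (hb : 0 < b) (hK : 0 ≤ K) :
    ∫ k in (Icc (-K) K)ᶜ, rexp (-b * k ^ 2) ≤ rexp (-b * K ^ 2) * √(π / b) := by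
  have hint : Integrable fun k : ℝ => rexp (-b * k ^ 2) := integrable_exp_neg_mul_sq hb
  have hcompl : (Icc (-K) K)ᶜ = Iio (-K) ∪ Ioi K := by
    ext; simp only [mem_compl_iff, mem_Icc, not_and_or, not_le, mem_union, mem_Iio, mem_Ioi]
  have hsymm : ∫ k in Iio (-K), rexp (-b * k ^ 2) = ∫ k in Ioi K, rexp (-b * k ^ 2) := by
    rw [← integral_Iic_eq_integral_Iio]
    have := integral_comp_neg_Iic (-K) fun k => rexp (-b * k ^ 2)
    simp only [neg_sq, neg_neg] at this
    exact this
  rw [hcompl, setIntegral_union (Ioi_disjoint_Iio_of_le (by linarith)).symm measurableSet_Ioi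
    hint.integrableOn hint.integrableOn, hsymm]
  linarith [integral_Ioi_exp_neg_mul_sq_le hb hK]

lemma norm_cexp_two_pi_I_mul (k u : ℝ) : ‖cexp (2 * π * I * k * u)‖ = 1 := by
  rw [show (2 * π * I * k * u : ℂ) = ((2 * π * k * u : ℝ) : ℂ) * I by push_cast; ring]
  exact Complex.norm_exp_ofReal_mul_I _

lemma norm_exp_neg_mul_sq_mul_cexp (b k u : ℝ) :
    ‖(rexp (-b * k ^ 2) : ℂ) * cexp (2 * π * I * k * u)‖ = rexp (-b * k ^ 2) := by
  rw [norm_mul, norm_cexp_two_pi_I_mul, mul_one, Complex.norm_real, norm_of_nonneg (exp_pos _).le]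

lemma integrable_exp_neg_mul_sq_mul_cexp {b : ℝ} (hb : 0 < b) (u : ℝ) :
    Integrable fun k : ℝ => (rexp (-b * k ^ 2) : ℂ) * cexp (2 * π * I * k * u) :=
  (integrable_exp_neg_mul_sq hb).mono' (by fun_prop)
    (.of_forall fun k => (norm_exp_neg_mul_sq_mul_cexp b k u).le)

lemma integral_exp_neg_mul_sq_mul_cexp {b : ℝ} (hb : 0 < b) (u : ℝ) :
    ∫ k : ℝ, (rexp (-b * k ^ 2) : ℂ) * cexp (2 * π * I * k * u)
      = ((√(π / b) * rexp (-(π ^ 2 * u ^ 2 / b)) : ℝ) : ℂ) := by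
  calc ∫ k : ℝ, (rexp (-b * k ^ 2) : ℂ) * cexp (2 * π * I * k * u)
      = ∫ k : ℝ, cexp (I * ((2 * π * u : ℝ) : ℂ) * k) * cexp (-(b : ℂ) * k ^ 2) := by
        congr 1; funext k
        rw [mul_comm, Complex.ofReal_exp]
        push_cast; ring_nf
    _ = (π / (b : ℂ)) ^ (1 / 2 : ℂ) * cexp (-((2 * π * u : ℝ) : ℂ) ^ 2 / (4 * b)) :=
        fourierIntegral_gaussian (by simpa using hb) _
    _ = _ := by
        rw [show (π / b : ℂ) = ((π / b : ℝ) : ℂ) by push_cast; rfl,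
          show (1 / 2 : ℂ) = ((1 / 2 : ℝ) : ℂ) by norm_num,
          ← Complex.ofReal_cpow (div_pos pi_pos hb).le, ← sqrt_eq_rpow,
          show -((2 * π * u : ℝ) : ℂ) ^ 2 / (4 * b) = ((-(π ^ 2 * u ^ 2 / b) : ℝ) : ℂ) by
            push_cast; field_simp; ring]
        push_cast; rfl

/-- For `b = π σ² / K²` this is the window `φ`: with exact data the estimator is `φ * f_*`. -/
noncomputable def bandGaussian (b K u : ℝ) : ℂ :=
  ∫ k in Icc (-K) K, (rexp (-b * k ^ 2) : ℂ) * cexp (2 * π * I * k * u)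

lemma continuous_bandGaussian (b K : ℝ) : Continuous (bandGaussian b K) :=
  continuous_parametric_integral_of_continuous (by fun_prop) isCompact_Icc

lemma norm_bandGaussian_le {b : ℝ} (hb : 0 < b) (K u : ℝ) : ‖bandGaussian b K u‖ ≤ √(π / b) :=
  calc ‖bandGaussian b K u‖ ≤ ∫ k in Icc (-K) K, rexp (-b * k ^ 2) :=
        norm_integral_le_of_norm_le (integrable_exp_neg_mul_sq hb).integrableOn
          (.of_forall fun k => (norm_exp_neg_mul_sq_mul_cexp b k u).le)
    _ ≤ ∫ k, rexp (-b * k ^ 2) :=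
        setIntegral_le_integral (integrable_exp_neg_mul_sq hb) (.of_forall fun _ => (exp_pos _).le)
    _ = √(π / b) := integral_gaussian b

/-- `bandGaussian` is the Fourier transform of the Gaussian minus its part outside the band. -/
lemma norm_bandGaussian_le_add {b K : ℝ} (hb : 0 < b) (hK : 0 ≤ K) (u : ℝ) :
    ‖bandGaussian b K u‖ ≤ √(π / b) * (rexp (-(π ^ 2 * u ^ 2 / b)) + rexp (-b * K ^ 2)) := by
  have hsplit : bandGaussian b K u = (∫ k, (rexp (-b * k ^ 2) : ℂ) * cexp (2 * π * I * k * u))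
      - ∫ k in (Icc (-K) K)ᶜ, (rexp (-b * k ^ 2) : ℂ) * cexp (2 * π * I * k * u) := by
    rw [← integral_add_compl measurableSet_Icc (integrable_exp_neg_mul_sq_mul_cexp hb u),
      add_sub_cancel_right, bandGaussian]
  have htail : ‖∫ k in (Icc (-K) K)ᶜ, (rexp (-b * k ^ 2) : ℂ) * cexp (2 * π * I * k * u)‖
      ≤ rexp (-b * K ^ 2) * √(π / b) :=
    (norm_integral_le_of_norm_le (integrable_exp_neg_mul_sq hb).integrableOn
      (.of_forall fun k => (norm_exp_neg_mul_sq_mul_cexp b k u).le)).trans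
      (integral_compl_Icc_exp_neg_mul_sq_le hb hK)
  rw [hsplit, integral_exp_neg_mul_sq_mul_cexp hb, mul_add]
  refine (norm_sub_le _ _).trans (add_le_add (le_of_eq ?_) (by linarith))
  rw [Complex.norm_real, norm_of_nonneg (by positivity)]

lemma sqrt_pi_div_pi_mul_div_sq {τ K : ℝ} (hτ : 0 < τ) (hK : 0 < K) :
    √(π / (π * τ / K ^ 2)) = K / √τ := by
  rw [show π / (π * τ / K ^ 2) = K ^ 2 / τ by field_simp, sqrt_div' _ hτ.le, sqrt_sq hK.le]

lemma norm_bandGaussian_le_of_lt_abs {τ K u : ℝ} (hτ : 0 < τ) (hK : 0 < K) (hu : τ / K < |u|) :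
    ‖bandGaussian (π * τ / K ^ 2) K u‖ ≤ K / √τ * (2 * rexp (-(π * τ))) := by
  have hb : 0 < π * τ / K ^ 2 := by positivity
  have hτu : τ ^ 2 < u ^ 2 * K ^ 2 := by
    rw [← sq_abs u, ← mul_pow]
    exact pow_lt_pow_left₀ ((div_lt_iff₀ hK).1 hu) hτ.le two_ne_zero
  have hfar : rexp (-(π ^ 2 * u ^ 2 / (π * τ / K ^ 2))) ≤ rexp (-(π * τ)) := by
    rw [exp_le_exp, neg_le_neg_iff, show π ^ 2 * u ^ 2 / (π * τ / K ^ 2) = π * (u ^ 2 * K ^ 2 / τ)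
      by field_simp, mul_le_mul_iff_of_pos_left pi_pos, le_div_iff₀ hτ]
    nlinarith
  have hedge : rexp (-(π * τ / K ^ 2) * K ^ 2) = rexp (-(π * τ)) := by
    congr 1; field_simp
  calc ‖bandGaussian (π * τ / K ^ 2) K u‖
      ≤ K / √τ * (rexp (-(π ^ 2 * u ^ 2 / (π * τ / K ^ 2))) + rexp (-(π * τ / K ^ 2) * K ^ 2)) :=
        sqrt_pi_div_pi_mul_div_sq hτ hK ▸ norm_bandGaussian_le_add hb hK.le u
    _ ≤ K / √τ * (2 * rexp (-(π * τ))) := by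
        rw [hedge, two_mul]; gcongr

section Fubini

variable {μ : Measure ℝ} {b : ℝ}

lemma fourier_mul_exp_neg_mul_sq_mul_cexp (k x : ℝ) :
    (∫ t, cexp (-(2 * π * I * t * k)) ∂μ) * (rexp (-b * k ^ 2) : ℂ) * cexp (2 * π * I * k * x)
      = ∫ t, (rexp (-b * k ^ 2) : ℂ) * cexp (2 * π * I * k * ((x - t : ℝ) : ℂ)) ∂μ := by
  rw [← integral_mul_const, ← integral_mul_const]
  congr 1; funext t
  rw [show (2 * π * I * k * ((x - t : ℝ) : ℂ)) = -(2 * π * I * t * k) + 2 * π * I * k * x by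
    push_cast; ring, Complex.exp_add]
  ring

lemma integrable_exp_neg_mul_sq_mul_cexp_prod [IsFiniteMeasure μ] (hb : 0 ≤ b) (K x : ℝ) :
    Integrable (Function.uncurry fun k t : ℝ =>
      (rexp (-b * k ^ 2) : ℂ) * cexp (2 * π * I * k * ((x - t : ℝ) : ℂ)))
      ((volume.restrict (Icc (-K) K)).prod μ) := by
  have : IsFiniteMeasure (volume.restrict (Icc (-K) K)) := by
    rw [isFiniteMeasure_restrict]; exact measure_Icc_lt_top.ne
  refine .of_bound (by fun_prop) 1 (.of_forall fun p => ?_)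
  rw [Function.uncurry_apply_pair, norm_exp_neg_mul_sq_mul_cexp]
  exact exp_le_one_iff.2 (by nlinarith [sq_nonneg p.1])

lemma integrableOn_fourier_mul_exp_neg_mul_sq_mul_cexp [IsFiniteMeasure μ] (hb : 0 ≤ b)
    (K x : ℝ) :
    IntegrableOn (fun k : ℝ => (∫ t, cexp (-(2 * π * I * t * k)) ∂μ) * (rexp (-b * k ^ 2) : ℂ)
      * cexp (2 * π * I * k * x)) (Icc (-K) K) := by
  simp only [fourier_mul_exp_neg_mul_sq_mul_cexp]
  exact (integrable_exp_neg_mul_sq_mul_cexp_prod hb K x).integral_prod_left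

lemma setIntegral_fourier_mul_exp_neg_mul_sq_mul_cexp [IsFiniteMeasure μ] (hb : 0 ≤ b)
    (K x : ℝ) :
    ∫ k in Icc (-K) K, (∫ t, cexp (-(2 * π * I * t * k)) ∂μ) * (rexp (-b * k ^ 2) : ℂ)
      * cexp (2 * π * I * k * x) = ∫ t, bandGaussian b K (x - t) ∂μ := by
  simp only [fourier_mul_exp_neg_mul_sq_mul_cexp]
  exact integral_integral_swap (integrable_exp_neg_mul_sq_mul_cexp_prod hb K x)

end Fubini

lemma norm_setIntegral_mul_exp_neg_mul_sq_mul_cexp_le {b K ε : ℝ} (hb : 0 < b) (hε : 0 ≤ ε)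
    {φ : ℝ → ℂ} (hφ : ∀ k ∈ Icc (-K) K, ‖φ k‖ ≤ ε) (x : ℝ) :
    ‖∫ k in Icc (-K) K, φ k * (rexp (-b * k ^ 2) : ℂ) * cexp (2 * π * I * k * x)‖
      ≤ ε * √(π / b) :=
  calc ‖∫ k in Icc (-K) K, φ k * (rexp (-b * k ^ 2) : ℂ) * cexp (2 * π * I * k * x)‖
      ≤ ∫ k in Icc (-K) K, ε * rexp (-b * k ^ 2) := by
        refine norm_integral_le_of_norm_le ((integrable_exp_neg_mul_sq hb).const_mul ε).integrableOn
          ((ae_restrict_iff' measurableSet_Icc).2 (.of_forall fun k hk => ?_))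
        rw [mul_assoc, norm_mul, norm_exp_neg_mul_sq_mul_cexp]
        exact mul_le_mul_of_nonneg_right (hφ k hk) (exp_pos _).le
    _ ≤ ∫ k, ε * rexp (-b * k ^ 2) :=
        setIntegral_le_integral ((integrable_exp_neg_mul_sq hb).const_mul ε)
          (.of_forall fun _ => by positivity)
    _ = ε * √(π / b) := by rw [integral_const_mul, integral_gaussian]

lemma norm_setIntegral_mul_exp_neg_mul_sq_mul_cexp_le_add {μ : Measure ℝ} [IsFiniteMeasure μ]
    {b K ε : ℝ} (hb : 0 < b) (hε : 0 ≤ ε) {y : ℝ → ℂ}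
    (hy : ∀ k ∈ Icc (-K) K, ‖y k - ∫ t, cexp (-(2 * π * I * t * k)) ∂μ‖ ≤ ε) (x : ℝ) :
    ‖∫ k in Icc (-K) K, y k * (rexp (-b * k ^ 2) : ℂ) * cexp (2 * π * I * k * x)‖
      ≤ ε * √(π / b) + ‖∫ t, bandGaussian b K (x - t) ∂μ‖ := by
  by_cases hyint : IntegrableOn
    (fun k => y k * (rexp (-b * k ^ 2) : ℂ) * cexp (2 * π * I * k * x)) (Icc (-K) K)
  swap
  · rw [integral_undef hyint, norm_zero]; positivity
  set F : ℝ → ℂ := fun k => ∫ t, cexp (-(2 * π * I * t * k)) ∂μ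
  have hF := integrableOn_fourier_mul_exp_neg_mul_sq_mul_cexp (μ := μ) hb.le K x
  have hsplit : ∫ k in Icc (-K) K, (y k - F k) * (rexp (-b * k ^ 2) : ℂ) * cexp (2 * π * I * k * x)
      = (∫ k in Icc (-K) K, y k * (rexp (-b * k ^ 2) : ℂ) * cexp (2 * π * I * k * x))
        - ∫ k in Icc (-K) K, F k * (rexp (-b * k ^ 2) : ℂ) * cexp (2 * π * I * k * x) := by
    rw [← integral_sub hyint hF]
    congr 1; funext k; ring
  rw [← eq_sub_iff_add_eq.1 hsplit, setIntegral_fourier_mul_exp_neg_mul_sq_mul_cexp hb.le K x]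
  exact (norm_add_le _ _).trans
    (add_le_add_left (norm_setIntegral_mul_exp_neg_mul_sq_mul_cexp_le hb hε hy x) _)

section Spikes

variable {α E : Type*} [MeasurableSpace α] [NormedAddCommGroup E] [NormedSpace ℝ E]
  [CompleteSpace E] {S : ℕ} {w : Fin S → ℝ} {xs : Fin S → α} {r : Measure α}

lemma integral_sum_smul_dirac_add [IsFiniteMeasure r] (hw : ∀ s, 0 ≤ w s) {h : α → E}
    (hh : StronglyMeasurable h) {C : ℝ} (hC : ∀ t, ‖h t‖ ≤ C) :
    ∫ t, h t ∂((∑ s, ENNReal.ofReal (w s) • Measure.dirac (xs s)) + r)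
      = ∑ s, w s • h (xs s) + ∫ t, h t ∂r := by
  have hint : ∀ ν : Measure α, IsFiniteMeasure ν → Integrable h ν := fun ν _ =>
    .of_bound hh.aestronglyMeasurable C (.of_forall hC)
  have hδ : ∀ s, Integrable h (ENNReal.ofReal (w s) • Measure.dirac (xs s)) := fun s =>
    (hint _ inferInstance).smul_measure ENNReal.ofReal_ne_top
  rw [integral_add_measure (integrable_finsetSum_measure.2 fun s _ => hδ s) (hint r inferInstance),
    integral_finsetSum_measure fun s _ => hδ s]
  congr 1
  refine Finset.sum_congr rfl fun s _ => ?_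
  rw [integral_smul_measure, integral_dirac' _ _ hh, ENNReal.toReal_ofReal (hw s)]

lemma norm_integral_sum_smul_dirac_add_le [IsFiniteMeasure r] (hw : ∀ s, 0 ≤ w s) {h : α → E}
    (hh : StronglyMeasurable h) {A C : ℝ} (hA : ∀ s, ‖h (xs s)‖ ≤ A) (hC : ∀ t, ‖h t‖ ≤ C) :
    ‖∫ t, h t ∂((∑ s, ENNReal.ofReal (w s) • Measure.dirac (xs s)) + r)‖
      ≤ (∑ s, w s) * A + C * r.real univ := by
  rw [integral_sum_smul_dirac_add hw hh hC, Finset.sum_mul]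
  refine (norm_add_le _ _).trans (add_le_add ((norm_sum_le _ _).trans
    (Finset.sum_le_sum fun s _ => ?_)) (norm_integral_le_of_norm_le_const (.of_forall hC)))
  rw [norm_smul, norm_of_nonneg (hw s)]
  exact mul_le_mul_of_nonneg_left (hA s) (hw s)

lemma sum_le_one_of_isProbabilityMeasure_sum_smul_dirac_add (hw : ∀ s, 0 ≤ w s)
    [hprob : IsProbabilityMeasure ((∑ s, ENNReal.ofReal (w s) • Measure.dirac (xs s)) + r)] :
    ∑ s, w s ≤ 1 := by
  have h := hprob.measure_univ
  rw [Measure.add_apply, Measure.finsetSum_apply] at h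
  simp only [Measure.smul_apply, measure_univ, smul_eq_mul, mul_one] at h
  rw [← ENNReal.ofReal_le_one, ENNReal.ofReal_sum_of_nonneg fun s _ => hw s, ← h]
  exact le_self_add

end Spikes

lemma exp_neg_pi_mul_one_div_pi_mul_log {a : ℝ} (ha : 0 < a) :
    rexp (-(π * ((1 / π) * log a))) = a⁻¹ := by
  rw [← mul_assoc, mul_one_div_cancel pi_ne_zero, one_mul, exp_neg, exp_log ha]

lemma neg_pi_mul_mul_sqrt_div_sq {τ : ℝ} (hτ : 0 ≤ τ) (k K : ℝ) :
    -π * (k * √τ / K) ^ 2 = -(π * τ / K ^ 2) * k ^ 2 := by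
  rw [div_pow, mul_pow, sq_sqrt hτ]; ring

theorem real_line_estimated_set_near_spikes
    (S : ℕ) (w : Fin S → ℝ) (xs : Fin S → ℝ) (r : Measure ℝ)
    (β ω ε K : ℝ) (hK : 0 < K) (hω : 0 ≤ ω) (hβω : ω < β) (hβ1 : β ≤ 1)
    (hε : 0 ≤ ε) (hε6 : ε ≤ (β - ω) / 6)
    (hw : ∀ s, β ≤ w s)
    (f : Measure ℝ)
    (hf : f = (∑ s : Fin S, ENNReal.ofReal (w s) • Measure.dirac (xs s)) + r)
    (hprob : IsProbabilityMeasure f)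
    (hr : r Set.univ ≤ ENNReal.ofReal ω)
    (y : ℝ → ℂ)
    (hy : ∀ k : ℝ, |k| ≤ K →
      ‖(y k - ∫ t, Complex.exp (-(2 * π * Complex.I * t * k)) ∂f)‖ ≤ ε)
    (σ τ : ℝ) (hσ : σ = Real.sqrt ((1 / π) * Real.log (6 / (β - ω))))
    (hτ : τ = (1 / π) * Real.log (6 / (β - ω))) :
    ∀ x : ℝ,
      (2 * β + ω) * K / (3 * σ) <
        ‖(∫ k in Icc (-K) K, y k * Real.exp (-π * (k * σ / K) ^ 2) *
          Complex.exp (2 * π * Complex.I * k * x))‖ →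
      ∃ s : Fin S, |x - xs s| ≤ τ / K := by
  intro x hx
  by_contra! hfar
  subst hf
  rw [← hτ] at hσ
  subst hσ
  have hwnn : ∀ s, 0 ≤ w s := fun s => (hω.trans_lt hβω).le.trans (hw s)
  have hτpos : 0 < τ := hτ ▸ mul_pos (by positivity) (log_pos (by rw [lt_div_iff₀] <;> linarith))
  have hexp : rexp (-(π * τ)) = (β - ω) / 6 := by
    rw [hτ, exp_neg_pi_mul_one_div_pi_mul_log (by positivity), inv_div]
  have hr' : IsFiniteMeasure r := ⟨hr.trans_lt ENNReal.ofReal_lt_top⟩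
  have hb : 0 < π * τ / K ^ 2 := by positivity
  simp only [neg_pi_mul_mul_sqrt_div_sq hτpos.le] at hx
  have hmain := norm_setIntegral_mul_exp_neg_mul_sq_mul_cexp_le_add hb hε
    (fun k hk => hy k (abs_le.2 hk)) x
  have hspikes := norm_integral_sum_smul_dirac_add_le hwnn (r := r)
    (h := fun t => bandGaussian (π * τ / K ^ 2) K (x - t))
    ((continuous_bandGaussian _ K).comp (continuous_sub_left x)).stronglyMeasurable
    (fun s => norm_bandGaussian_le_of_lt_abs hτpos hK (hfar s))
    (fun t => norm_bandGaussian_le hb K _)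
  rw [sqrt_pi_div_pi_mul_div_sq hτpos hK] at hmain hspikes
  rw [hexp] at hspikes
  have hW := sum_le_one_of_isProbabilityMeasure_sum_smul_dirac_add hwnn (r := r) (xs := xs)
  have hrω : r.real univ ≤ ω := ENNReal.toReal_le_of_le_ofReal hω hr
  have hc : 0 < K / √τ := by positivity
  rw [show (2 * β + ω) * K / (3 * √τ) = K / √τ * ((2 * β + ω) / 3) by ring] at hx
  linarith [mul_le_mul_of_nonneg_left hε6 hc.le, mul_le_mul_of_nonneg_left hrω hc.le,
    mul_le_mul_of_nonneg_right hW (by positivity : 0 ≤ K / √τ * (2 * ((β - ω) / 6))),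
    mul_pos hc (sub_pos.2 hβω)]
end

section
/- Let f_* = Σ_{s=1}^S w_s δ_{x_s} + r be a probability measure on the torus 𝕋 = ℝ/ℤ with w_s ≥ β > 0 and r nonnegative with r(𝕋) ≤ ω < β. Let y(k), |k| ≤ K integer, satisfy |y(k) − f̂_*(k)| ≤ ε where f̂_*(k) = ∫_𝕋 e^{−2πixk} df_*(x). Let σ = √((1/π)log(12/(β−ω))), φ̂_p(k) = exp(−π(kσ/K)²), and g(x) = Σ_{|k|≤K} y(k)φ̂_p(k)e^{2πikx}. Then for all x ∈ 𝕋, |g(x) − (φ_p * f_*)(x)| < (ε + exp(−πσ²))·φ_p(0), where φ_p is the periodized Gaussian with Fourier coefficients φ̂_p(k). -/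
open Real MeasureTheory Set
open Complex (I)
open scoped Complex

/-!
The periodized Gaussian `φ_p = periodizedGaussian σ K` has, by Poisson summation, the Fourier
coefficients `φ̂_p(k) = gaussianCoeff σ K k = exp (-π (kσ/K)²)`, so `φ_p * f` is the Fourier series
`∑ₖ f̂(k) φ̂_p(k) e^{2πikx}`. On the frequencies `|k| ≤ K` it differs from `g` by at most
`ε ∑_{|k|≤K} φ̂_p(k) ≤ ε φ_p(0)`; since `|f̂(k)| ≤ 1`, the remaining frequencies contribute at most
the Gaussian tail `∑_{|k|>K} φ̂_p(k)`. Bounding `k² ≥ K² + 2K(|k| - K)` turns the tail into two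
geometric series, whose sum is `< (K/σ) e^{-πσ²} ≤ φ_p(0) e^{-πσ²}` as soon as `πσ > 1`, which the
choice of `σ` guarantees.
-/

lemma norm_sum_sub_tsum_le {ι E : Type*} [NormedAddCommGroup E] [CompleteSpace E]
    {u v : ι → E} {c : ι → ℝ} (hc : Summable c) (hu : ∀ i, ‖u i‖ ≤ c i) (s : Finset ι)
    {ε : ℝ} (hv : ∀ i ∈ s, ‖v i - u i‖ ≤ ε * c i) :
    ‖∑ i ∈ s, v i - ∑' i, u i‖ ≤ ε * ∑ i ∈ s, c i + ∑' i : {i // i ∉ s}, c i := by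
  rw [← (hc.of_norm_bounded hu).sum_add_tsum_subtype_compl s, ← sub_sub,
    ← Finset.sum_sub_distrib, Finset.mul_sum]
  exact (norm_sub_le _ _).trans <| add_le_add (norm_sum_le_of_le s hv)
    (tsum_of_norm_bounded (hc.subtype _).hasSum fun i ↦ hu i)

lemma tsum_compl_Icc_of_even {E : Type*} [NormedAddCommGroup E] [CompleteSpace E]
    {f : ℤ → E} (hf : Summable f) (heven : ∀ k, f (-k) = f k) (K : ℕ) :
    ∑' k : {k : ℤ // k ∉ Finset.Icc (-(K : ℤ)) K}, f k = 2 • ∑' n : ℕ, f (n + K + 1) := by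
  set s : Set ℤ := {k | k ∉ Finset.Icc (-(K : ℤ)) K}
  let g : ℕ ⊕ ℕ → ℤ := Sum.elim (fun n ↦ n + K + 1) (fun n ↦ -(n + K + 1))
  have hg : Function.Injective g := by
    rintro (a | a) (b | b) h <;> simp [g] at h ⊢ <;> omega
  have hgs : ∀ m, g m ∈ s := by
    rintro (n | n) <;> simp only [g, s, Set.mem_ofPred_eq, Finset.mem_Icc, Sum.elim_inl,
      Sum.elim_inr] <;> omega
  have hrange : Function.support (s.indicator f) ⊆ Set.range g := by
    intro k hk
    have hks : k ∉ Finset.Icc (-(K : ℤ)) K := Set.mem_of_indicator_ne_zero hk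
    rw [Finset.mem_Icc, not_and_or, not_le, not_le] at hks
    rcases hks with hk | hk
    · exact ⟨.inr (-k - K - 1).toNat, by simp [g]; omega⟩
    · exact ⟨.inl (k - K - 1).toNat, by simp [g]; omega⟩
  have hpos : Summable fun n : ℕ ↦ f (n + K + 1) :=
    hf.comp_injective fun a b h ↦ by simpa using h
  have hneg : ∀ n : ℕ, f (g (.inr n)) = f (n + K + 1) := fun n ↦ heven _
  change ∑' k : s, f k = _
  rw [tsum_subtype, ← hg.tsum_eq hrange]
  simp_rw [Set.indicator_of_mem (hgs _)]
  rw [Summable.tsum_sum (f := fun m ↦ f (g m)) hpos (hpos.congr fun n ↦ (hneg n).symm),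
    two_nsmul]
  simp only [hneg]
  rfl

lemma tsum_exp_neg_pow_succ_lt {b : ℝ} (hb : 0 < b) :
    ∑' n : ℕ, exp (-b) ^ (n + 1) < 1 / b := by
  have hq : exp (-b) < 1 := exp_lt_one_iff.mpr (neg_neg_iff_pos.mpr hb)
  have hmul : exp (-b) * (b + 1) < 1 := by
    calc exp (-b) * (b + 1) < exp (-b) * exp b := by gcongr; exact add_one_lt_exp hb.ne'
      _ = 1 := by rw [← exp_add, neg_add_cancel, exp_zero]
  simp_rw [pow_succ, tsum_mul_right, tsum_geometric_of_lt_one (exp_pos _).le hq]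
  rw [← div_eq_inv_mul, div_lt_div_iff₀ (sub_pos.mpr hq) hb]
  linarith

lemma one_lt_pi_mul_sqrt {t : ℝ} (ht : 1 / π < t) : 1 < π * √(1 / π * t) := by
  have h : 1 / π < √(1 / π * t) := by
    rw [lt_sqrt (by positivity), sq]
    gcongr
  exact (div_lt_iff₀' pi_pos).mp h

lemma one_lt_pi_mul_sqrt_log {β ω : ℝ} (hω : 0 ≤ ω) (hβω : ω < β) (hβ1 : β ≤ 1) :
    1 < π * √(1 / π * log (12 / (β - ω))) := by
  refine one_lt_pi_mul_sqrt ?_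
  calc 1 / π < 1 := (div_lt_one pi_pos).mpr (by linarith [pi_gt_three])
    _ ≤ log 12 := by rw [le_log_iff_exp_le (by norm_num)]; linarith [exp_one_lt_d9]
    _ ≤ log (12 / (β - ω)) := by
      gcongr
      rw [le_div_iff₀ (by linarith)]
      linarith

lemma norm_exp_two_pi_I_mul_int_mul (k : ℤ) (u : ℝ) : ‖cexp (2 * π * I * k * u)‖ = 1 := by
  simp [Complex.norm_exp]

lemma norm_mul_ofReal_mul_exp (z : ℂ) {r : ℝ} (hr : 0 ≤ r) (k : ℤ) (x : ℝ) :
    ‖z * r * cexp (2 * π * I * k * x)‖ = ‖z‖ * r := by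
  rw [norm_mul, norm_mul, norm_exp_two_pi_I_mul_int_mul, Complex.norm_of_nonneg hr, mul_one]

lemma norm_fourierCoeff_le_one (μ : Measure ℝ) [IsProbabilityMeasure μ] (k : ℤ) :
    ‖∫ t, cexp (-(2 * π * I * t * k)) ∂μ‖ ≤ 1 := by
  simpa using norm_integral_le_of_norm_le_const (μ := μ) (C := 1)
    (.of_forall fun t ↦ (by simp [Complex.norm_exp] : ‖cexp (-(2 * π * I * t * k))‖ ≤ 1))

lemma integral_fourierSeries_sub (μ : Measure ℝ) [IsFiniteMeasure μ] {c : ℤ → ℂ}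
    (hc : Summable fun k ↦ ‖c k‖) {φ : ℝ → ℂ}
    (hφ : ∀ u, φ u = ∑' k : ℤ, c k * cexp (2 * π * I * k * u)) (x : ℝ) :
    ∫ t, φ (x - t) ∂μ =
      ∑' k : ℤ, (∫ t, cexp (-(2 * π * I * t * k)) ∂μ) * c k * cexp (2 * π * I * k * x) := by
  have hnorm : ∀ (k : ℤ) t, ‖c k * cexp (2 * π * I * k * ↑(x - t))‖ = ‖c k‖ := fun k t ↦ by
    rw [norm_mul, norm_exp_two_pi_I_mul_int_mul, mul_one]
  simp_rw [hφ]
  rw [← integral_tsum_of_summable_integral_norm]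
  · congr 1; ext k
    rw [← integral_mul_const, ← integral_mul_const]
    congr 1; ext t
    rw [mul_comm (cexp _) (c k), mul_assoc (c k) (cexp _), ← Complex.exp_add]
    push_cast
    ring_nf
  · exact fun k ↦ .of_bound (by fun_prop) ‖c k‖ (.of_forall fun t ↦ (hnorm k t).le)
  · simpa only [hnorm, integral_const, smul_eq_mul] using hc.mul_left (μ.real univ)

lemma summable_exp_neg_pi_mul_int_sq {a : ℝ} (ha : 0 < a) :
    Summable fun k : ℤ ↦ exp (-π * a * k ^ 2) := by
  simpa [mul_assoc] using summable_pow_mul_jacobiTheta₂_term_bound 0 ha 0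

noncomputable def gaussianCoeff (σ L : ℝ) (k : ℤ) : ℝ := exp (-π * (k * σ / L) ^ 2)

noncomputable def periodizedGaussian (σ L u : ℝ) : ℝ :=
  ∑' j : ℤ, L / σ * exp (-π * (u + j) ^ 2 * L ^ 2 / σ ^ 2)

lemma summable_gaussianCoeff {σ L : ℝ} (hσ : 0 < σ) (hL : 0 < L) :
    Summable (gaussianCoeff σ L) :=
  (summable_exp_neg_pi_mul_int_sq (a := (σ / L) ^ 2) (by positivity)).congr fun k ↦ by
    rw [gaussianCoeff]; ring_nf

lemma gaussianCoeff_neg (σ L : ℝ) (k : ℤ) : gaussianCoeff σ L (-k) = gaussianCoeff σ L k := by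
  simp [gaussianCoeff, neg_mul, neg_div]

lemma gaussianCoeff_add_le (σ : ℝ) {K : ℕ} (hK : 0 < K) (n : ℕ) :
    gaussianCoeff σ K (n + K + 1) ≤ exp (-π * σ ^ 2) * exp (-(2 * π * σ ^ 2 / K)) ^ (n + 1) := by
  have hK' : (0 : ℝ) < K := Nat.cast_pos.mpr hK
  rw [gaussianCoeff, ← exp_nat_mul, ← exp_add]
  refine exp_le_exp.mpr ?_
  have hsq : (K : ℝ) ^ 2 + 2 * K * (n + 1) ≤ (n + K + 1) ^ 2 := by nlinarith
  calc -π * (((n + K + 1 : ℤ) : ℝ) * σ / K) ^ 2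
      = -(π * σ ^ 2 / K ^ 2) * (n + K + 1) ^ 2 := by push_cast; field_simp
    _ ≤ -(π * σ ^ 2 / K ^ 2) * (K ^ 2 + 2 * K * (n + 1)) :=
        mul_le_mul_of_nonpos_left hsq (neg_nonpos.mpr (by positivity))
    _ = -π * σ ^ 2 + (n + 1 : ℕ) * -(2 * π * σ ^ 2 / K) := by push_cast; field_simp; ring

lemma tsum_compl_Icc_gaussianCoeff_lt {σ : ℝ} (hσ : 1 < π * σ) {K : ℕ} (hK : 0 < K) :
    ∑' k : {k : ℤ // k ∉ Finset.Icc (-(K : ℤ)) K}, gaussianCoeff σ K k <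
      K / σ * exp (-π * σ ^ 2) := by
  have hσ0 : 0 < σ := pos_of_mul_pos_right (one_pos.trans hσ) pi_pos.le
  have hK' : (0 : ℝ) < K := Nat.cast_pos.mpr hK
  have hb : 0 < 2 * π * σ ^ 2 / K := by positivity
  have hgeom := (summable_geometric_of_lt_one (exp_pos _).le
    (exp_lt_one_iff.mpr (neg_neg_iff_pos.mpr hb))).comp_injective (add_left_injective 1)
  rw [tsum_compl_Icc_of_even (summable_gaussianCoeff hσ0 hK') (gaussianCoeff_neg σ K) K,
    nsmul_eq_mul, Nat.cast_ofNat]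
  calc 2 * ∑' n : ℕ, gaussianCoeff σ K (n + K + 1)
      ≤ 2 * ∑' n : ℕ, exp (-π * σ ^ 2) * exp (-(2 * π * σ ^ 2 / K)) ^ (n + 1) := by
        refine mul_le_mul_of_nonneg_left ?_ zero_le_two
        exact ((summable_gaussianCoeff hσ0 hK').comp_injective fun a b h ↦ by simpa using h)
          |>.tsum_le_tsum (gaussianCoeff_add_le σ hK) (hgeom.mul_left _)
    _ < 2 * (exp (-π * σ ^ 2) * (1 / (2 * π * σ ^ 2 / K))) := by
        rw [tsum_mul_left]
        gcongr
        exact tsum_exp_neg_pow_succ_lt hb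
    _ = K / (π * σ) / σ * exp (-π * σ ^ 2) := by field_simp
    _ < K / σ * exp (-π * σ ^ 2) := by
        gcongr
        exact div_lt_self hK' hσ

lemma periodizedGaussian_eq_tsum {σ L : ℝ} (hσ : 0 < σ) (hL : 0 < L) (u : ℝ) :
    (periodizedGaussian σ L u : ℂ) =
      ∑' k : ℤ, (gaussianCoeff σ L k : ℂ) * cexp (2 * π * I * k * u) := by
  have ha : 0 < (((σ / L) ^ 2 : ℝ) : ℂ).re := by rw [Complex.ofReal_re]; positivity
  have hσ' : (σ : ℂ) ≠ 0 := Complex.ofReal_ne_zero.mpr hσ.ne'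
  have hL' : (L : ℂ) ≠ 0 := Complex.ofReal_ne_zero.mpr hL.ne'
  have hsqrt : (((σ / L) ^ 2 : ℝ) : ℂ) ^ (1 / 2 : ℂ) = ((σ / L : ℝ) : ℂ) := by
    rw [show (1 / 2 : ℂ) = ((1 / 2 : ℝ) : ℂ) by norm_num, ← Complex.ofReal_cpow (by positivity),
      ← sqrt_eq_rpow, sqrt_sq (by positivity)]
  have poisson := Complex.tsum_exp_neg_quadratic ha (I * u)
  rw [hsqrt] at poisson
  calc (periodizedGaussian σ L u : ℂ)
      = L / σ * ∑' j : ℤ, cexp (-π * (u + j) ^ 2 * L ^ 2 / σ ^ 2) := by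
        simp only [periodizedGaussian, Complex.ofReal_tsum, Complex.ofReal_mul,
          Complex.ofReal_exp, tsum_mul_left]
        push_cast; rfl
    _ = L / σ * ∑' n : ℤ, cexp (-π / (((σ / L) ^ 2 : ℝ) : ℂ) * (n + I * (I * u)) ^ 2) := by
        rw [← (Equiv.neg ℤ).tsum_eq]
        congr 2; ext n; congr 1
        push_cast [Equiv.neg_apply]
        rw [← mul_assoc, Complex.I_mul_I]
        field_simp
        ring
    _ = ∑' k : ℤ, (gaussianCoeff σ L k : ℂ) * cexp (2 * π * I * k * u) := by
        rw [show (L : ℂ) / σ = 1 / ((σ / L : ℝ) : ℂ) by push_cast; field_simp, ← poisson]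
        congr 1; ext k
        rw [gaussianCoeff, Complex.ofReal_exp, ← Complex.exp_add]
        congr 1
        push_cast
        field_simp

lemma periodizedGaussian_zero_eq_tsum {σ L : ℝ} (hσ : 0 < σ) (hL : 0 < L) :
    periodizedGaussian σ L 0 = ∑' k : ℤ, gaussianCoeff σ L k := by
  have h := periodizedGaussian_eq_tsum hσ hL 0
  simp only [Complex.ofReal_zero, mul_zero, Complex.exp_zero, mul_one] at h
  exact_mod_cast h

lemma div_le_periodizedGaussian_zero {σ L : ℝ} (hσ : 0 < σ) (hL : 0 < L) :
    L / σ ≤ periodizedGaussian σ L 0 := by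
  have hsum : Summable fun j : ℤ ↦ L / σ * exp (-π * (0 + j) ^ 2 * L ^ 2 / σ ^ 2) :=
    ((summable_exp_neg_pi_mul_int_sq (a := (L / σ) ^ 2) (by positivity)).mul_left (L / σ)).congr
      fun j ↦ by ring_nf
  simpa [periodizedGaussian] using hsum.le_tsum 0 fun j _ ↦ by positivity

lemma norm_sum_gaussianCoeff_sub_integral_le {σ L : ℝ} (hσ : 0 < σ) (hL : 0 < L)
    (μ : Measure ℝ) [IsProbabilityMeasure μ] {y : ℤ → ℂ} {ε : ℝ} (s : Finset ℤ)
    (hy : ∀ k ∈ s, ‖y k - ∫ t, cexp (-(2 * π * I * t * k)) ∂μ‖ ≤ ε) (x : ℝ) :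
    ‖∑ k ∈ s, y k * gaussianCoeff σ L k * cexp (2 * π * I * k * x) -
        ((∫ t, periodizedGaussian σ L (x - t) ∂μ : ℝ) : ℂ)‖ ≤
      ε * ∑ k ∈ s, gaussianCoeff σ L k + ∑' k : {k // k ∉ s}, gaussianCoeff σ L k := by
  have hc := summable_gaussianCoeff hσ hL
  have hc0 : ∀ k, 0 ≤ gaussianCoeff σ L k := fun k ↦ (exp_pos _).le
  rw [← integral_complex_ofReal, integral_fourierSeries_sub μ
    (by simpa only [Complex.norm_real] using hc.norm) (periodizedGaussian_eq_tsum hσ hL) x]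
  refine norm_sum_sub_tsum_le hc (fun k ↦ ?_) s fun k hk ↦ ?_
  · rw [norm_mul_ofReal_mul_exp _ (hc0 k)]
    exact mul_le_of_le_one_left (hc0 k) (norm_fourierCoeff_le_one μ k)
  · rw [← sub_mul, ← sub_mul, norm_mul_ofReal_mul_exp _ (hc0 k)]
    exact mul_le_mul_of_nonneg_right (hy k hk) (hc0 k)

theorem periodic_approximation_bound_general
    (β ω ε : ℝ) (K : ℕ) (hK : 0 < K) (hω : 0 ≤ ω) (hβω : ω < β) (hβ1 : β ≤ 1) (hε : 0 ≤ ε)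
    (f : Measure ℝ)
    (hprob : IsProbabilityMeasure f)
    (σ : ℝ) (hσ : σ = Real.sqrt ((1 / π) * Real.log (12 / (β - ω))))
    (y : ℤ → ℂ)
    (hy : ∀ k : ℤ, |k| ≤ (K : ℤ) →
      ‖y k - ∫ t, Complex.exp (-(2 * π * Complex.I * t * k)) ∂f‖ ≤ ε)
    (φp : ℝ → ℝ)
    (hφp : ∀ x : ℝ, φp x = ∑' j : ℤ, ((K : ℝ) / σ) * Real.exp (-π * (x + j) ^ 2 * K ^ 2 / σ ^ 2)) :
    ∀ x : ℝ,
      ‖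
        ((∑ k ∈ Finset.Icc (-(K : ℤ)) (K : ℤ), y k * Real.exp (-π * (k * σ / K) ^ 2) *
            Complex.exp (2 * π * Complex.I * k * x)) -
          ((∫ t, φp (x - t) ∂f : ℝ) : ℂ))‖ <
      (ε + Real.exp (-π * σ ^ 2)) * φp 0 := by
  intro x
  obtain rfl : φp = periodizedGaussian σ K := funext hφp
  have hπσ : 1 < π * σ := hσ ▸ one_lt_pi_mul_sqrt_log hω hβω hβ1
  have hσ0 : 0 < σ := pos_of_mul_pos_right (one_pos.trans hπσ) pi_pos.le
  have hK' : (0 : ℝ) < K := Nat.cast_pos.mpr hK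
  refine (norm_sum_gaussianCoeff_sub_integral_le hσ0 hK' f _
    (fun k hk ↦ hy k (abs_le.mpr (Finset.mem_Icc.mp hk))) x).trans_lt ?_
  calc ε * ∑ k ∈ Finset.Icc (-(K : ℤ)) K, gaussianCoeff σ K k +
        ∑' k : {k : ℤ // k ∉ Finset.Icc (-(K : ℤ)) K}, gaussianCoeff σ K k
      < ε * periodizedGaussian σ K 0 + K / σ * exp (-π * σ ^ 2) := by
        refine add_lt_add_of_le_of_lt (mul_le_mul_of_nonneg_left ?_ hε)
          (tsum_compl_Icc_gaussianCoeff_lt hπσ hK)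
        rw [periodizedGaussian_zero_eq_tsum hσ0 hK']
        exact (summable_gaussianCoeff hσ0 hK').sum_le_tsum _ fun k _ ↦ (exp_pos _).le
    _ ≤ (ε + exp (-π * σ ^ 2)) * periodizedGaussian σ K 0 := by
        rw [add_mul, mul_comm (exp _)]
        gcongr
        exact div_le_periodizedGaussian_zero hσ0 hK'

theorem periodic_approximation_bound
    (S : ℕ) (w : Fin S → ℝ) (xs : Fin S → ℝ) (r : Measure ℝ)
    (β ω ε : ℝ) (K : ℕ) (hK : 0 < K) (hω : 0 ≤ ω) (hβω : ω < β) (hβ1 : β ≤ 1) (hε : 0 ≤ ε)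
    (hw : ∀ s, β ≤ w s)
    (f : Measure ℝ)
    (hf : f = (∑ s : Fin S, ENNReal.ofReal (w s) • Measure.dirac (xs s)) + r)
    (hprob : IsProbabilityMeasure f)
    (hr : r Set.univ ≤ ENNReal.ofReal ω)
    (σ : ℝ) (hσ : σ = Real.sqrt ((1 / π) * Real.log (12 / (β - ω))))
    (hK3 : 3 * σ ≤ (K : ℝ))
    (y : ℤ → ℂ)
    (hy : ∀ k : ℤ, |k| ≤ (K : ℤ) →
      ‖y k - ∫ t, Complex.exp (-(2 * π * Complex.I * t * k)) ∂f‖ ≤ ε)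
    (φp : ℝ → ℝ)
    (hφp : ∀ x : ℝ, φp x = ∑' j : ℤ, ((K : ℝ) / σ) * Real.exp (-π * (x + j) ^ 2 * K ^ 2 / σ ^ 2)) :
    ∀ x : ℝ,
      ‖
        ((∑ k ∈ Finset.Icc (-(K : ℤ)) (K : ℤ), y k * Real.exp (-π * (k * σ / K) ^ 2) *
            Complex.exp (2 * π * Complex.I * k * x)) -
          ((∫ t, φp (x - t) ∂f : ℝ) : ℂ))‖ <
      (ε + Real.exp (-π * σ ^ 2)) * φp 0 :=
  periodic_approximation_bound_general β ω ε K hK hω hβω hβ1 hε f hprob σ hσ y hy φp hφp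
end
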